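/- arXiv:1907.00732 — 6 statements merged into one kernel-verified Lean document; each statement's English description precedes it below -/
import Mathlib

section
/- Let 𝒜 be a unital C*-algebra and ρ a pure state on 𝒜. Then for every invertible g ∈ 𝒜, the state Φ_g(ρ) with (Φ_g(ρ))(a) = ρ(g† a g)/ρ(g† g) is a pure state. -/
open scoped ComplexOrder

/-- A state on a unital C*-algebra: a positive continuous linear functional with value 1
at the unit. -/
def IsState {A : Type*} [NormedRing A] [StarRing A] [NormedAlgebra ℂ A]
    (ρ : A →L[ℂ] ℂ) : Prop :=
  (∀ a : A, 0 ≤ ρ (star a * a)) ∧ ρ 1 = 1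

/-- A pure state: a state `ρ` such that every positive linear functional `ξ` with `ρ - ξ`
positive is of the form `ξ = λ • ρ` with `λ ∈ [0,1]`. -/
def IsPureState {A : Type*} [NormedRing A] [StarRing A] [NormedAlgebra ℂ A]
    (ρ : A →L[ℂ] ℂ) : Prop :=
  IsState ρ ∧
    ∀ ξ : A →L[ℂ] ℂ, (∀ a : A, 0 ≤ ξ (star a * a)) →
      (∀ a : A, 0 ≤ (ρ - ξ) (star a * a)) →
        ∃ c : ℝ, 0 ≤ c ∧ c ≤ 1 ∧ ξ = (c : ℂ) • ρ

/-- The deformed action `Φ_g(ρ) = ρ(g† · g)/ρ(g† g)` as a continuous linear functional. -/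
noncomputable def PhiActL {A : Type*} [NormedRing A] [StarRing A] [NormedAlgebra ℂ A]
    (g : A) (ρ : A →L[ℂ] ℂ) : A →L[ℂ] ℂ :=
  (ρ (star g * g))⁻¹ • ρ.comp (ContinuousLinearMap.mulLeftRight ℂ A (star g) g)

/-- If `ρ` is a pure state on a unital C*-algebra and `g` is invertible, then `Φ_g(ρ)` is a
pure state. -/
theorem stmt7 {A : Type*} [NormedRing A] [StarRing A] [CStarRing A] [NormedAlgebra ℂ A]
    [CompleteSpace A] [StarModule ℂ A] (ρ : A →L[ℂ] ℂ)
    (hpure : IsPureState ρ) (g : Aˣ) :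
    IsPureState (PhiActL (g : A) ρ) := by
  obtain ⟨⟨hpos, hone⟩, hext⟩ := hpure
  have happ : ∀ a : A, PhiActL (g : A) ρ a
      = (ρ (star (g : A) * (g : A)))⁻¹ * ρ (star (g : A) * a * (g : A)) := by
    intro a
    simp [PhiActL, ContinuousLinearMap.mulLeftRight_apply]
  set r : ℂ := ρ (star (g : A) * (g : A)) with hr_def
  have hr0 : 0 ≤ r := hpos _
  set gi : A := ((g⁻¹ : Aˣ) : A) with hgi_def
  have hgig : gi * (g : A) = 1 := by
    rw [hgi_def, ← Units.val_mul, inv_mul_cancel, Units.val_one]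
  have hggi : (g : A) * gi = 1 := by
    rw [hgi_def, ← Units.val_mul, mul_inv_cancel, Units.val_one]
  -- r ≠ 0
  have hrne : r ≠ 0 := by
    intro h0
    set x : A := star gi with hx_def
    have hxg : star x * (g : A) = 1 := by
      rw [hx_def, star_star, hgig]
    have hgx : star (g : A) * x = 1 := by
      rw [hx_def, ← star_mul, hgig, star_one]
    set s : ℂ := ρ (star x * x) with hs_def
    set t : ℝ := -(s.re) / 2 - 1 with ht_def
    have h1 : 0 ≤ ρ (star (x + (t : ℂ) • (g : A)) * (x + (t : ℂ) • (g : A))) := hpos _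
    have expand : star (x + (t : ℂ) • (g : A)) * (x + (t : ℂ) • (g : A))
        = star x * x + ((2 * t : ℝ) : ℂ) • (1 : A)
          + (((t : ℝ) ^ 2 : ℝ) : ℂ) • (star (g : A) * (g : A)) := by
      rw [star_add, star_smul, add_mul, mul_add, mul_add]
      rw [smul_mul_assoc, smul_mul_assoc, mul_smul_comm, mul_smul_comm]
      rw [hxg, hgx, Complex.star_def, Complex.conj_ofReal, smul_smul]
      push_cast
      module
    rw [expand, map_add, map_add, map_smul, map_smul, hone, ← hr_def, h0, ← hs_def] at h1
    simp only [smul_eq_mul, mul_one, mul_zero, add_zero] at h1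
    rw [Complex.le_def] at h1
    obtain ⟨h1re, -⟩ := h1
    simp only [Complex.add_re, Complex.zero_re, Complex.ofReal_re] at h1re
    rw [ht_def] at h1re
    linarith
  have him : r.im = 0 := by
    rw [Complex.le_def] at hr0
    simpa using hr0.2.symm
  have hre : 0 < r.re := by
    rw [Complex.le_def] at hr0
    rcases lt_or_eq_of_le (by simpa using hr0.1) with h | h
    · exact h
    · exact absurd (Complex.ext h.symm him) hrne
  have hr_real : r = ((r.re : ℝ) : ℂ) := Complex.ext rfl (by simp [him])
  have hrinv : 0 ≤ r⁻¹ := by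
    rw [hr_real, ← Complex.ofReal_inv, Complex.zero_le_real]
    positivity
  refine ⟨⟨?_, ?_⟩, ?_⟩
  · intro a
    rw [happ]
    have : star (g : A) * (star a * a) * (g : A) = star (a * (g : A)) * (a * (g : A)) := by
      simp [star_mul, mul_assoc]
    rw [this]
    exact mul_nonneg hrinv (hpos _)
  · rw [happ, mul_one]
    exact inv_mul_cancel₀ hrne
  · intro ξ hξpos hξle
    set ξ' : A →L[ℂ] ℂ := r • ξ.comp (ContinuousLinearMap.mulLeftRight ℂ A (star gi) gi)
      with hξ'_def
    have hξ'app : ∀ a : A, ξ' a = r * ξ (star gi * a * gi) := by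
      intro a
      simp [hξ'_def, ContinuousLinearMap.mulLeftRight_apply]
    have hξ'pos : ∀ a : A, 0 ≤ ξ' (star a * a) := by
      intro a
      rw [hξ'app]
      have : star gi * (star a * a) * gi = star (a * gi) * (a * gi) := by
        simp [star_mul, mul_assoc]
      rw [this]
      exact mul_nonneg hr0 (hξpos _)
    have hsub : ∀ a : A, 0 ≤ (ρ - ξ') (star a * a) := by
      intro a
      set b : A := a * gi with hb_def
      have hb : a = b * (g : A) := by
        rw [hb_def, mul_assoc, hgig, mul_one]
      have ha : star a * a = star (g : A) * (star b * b) * (g : A) := by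
        conv_lhs => rw [hb]
        simp [star_mul, mul_assoc]
      have key1 : ρ (star a * a) = r * PhiActL (g : A) ρ (star b * b) := by
        rw [ha, happ, ← mul_assoc r, mul_inv_cancel₀ hrne, one_mul]
      have key2 : ξ' (star a * a) = r * ξ (star b * b) := by
        rw [hξ'app]
        congr 2
        rw [ha, ← mul_assoc, ← mul_assoc, ← star_mul, hggi, star_one, one_mul,
          mul_assoc, hggi, mul_one]
      have := hξle b
      rw [ContinuousLinearMap.sub_apply] at this ⊢
      rw [key1, key2, ← mul_sub]
      exact mul_nonneg hr0 this
    obtain ⟨c, hc0, hc1, hceq⟩ := hext ξ' hξ'pos hsub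
    refine ⟨c, hc0, hc1, ?_⟩
    ext a
    have h1 : ξ a = r⁻¹ * ξ' (star (g : A) * a * (g : A)) := by
      rw [hξ'app]
      have : star gi * (star (g : A) * a * (g : A)) * gi = a := by
        rw [← mul_assoc, ← mul_assoc, ← star_mul, hggi, star_one, one_mul,
          mul_assoc, hggi, mul_one]
      rw [this, ← mul_assoc, inv_mul_cancel₀ hrne, one_mul]
    rw [h1, hceq]
    simp only [ContinuousLinearMap.smul_apply, smul_eq_mul, happ, ← hr_def]
    ring
end

section
/- Let 𝒜 be a unital C*-algebra and τ a tracial state (τ(ab) = τ(ba) for all a, b). Then the orbit of τ under the action Φ_g(τ)(a) = τ(g† a g)/τ(g† g) is a convex subset of the state space: for any invertible g₁, g₂ and λ ∈ [0,1], the state λ Φ_{g₁}(τ) + (1−λ) Φ_{g₂}(τ) equals Φ_p(τ) for some invertible element p of 𝒜. -/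
open scoped ComplexOrder

/-!
Since `τ` is tracial, `Φ_g(τ) = τ(ρ_g · -)` with density `ρ_g = g g† / τ(g† g)`, a
strictly positive element with `τ(ρ_g) = 1`. Convex combinations of such densities are again
strictly positive of trace one, and conversely every strictly positive density `x` is realised
by the invertible element `p = √x`, because `τ(p† a p) = τ(p p† a) = τ(x a)`.
-/

section Density

variable {A F : Type*} [Ring A] [StarRing A] [Algebra ℂ A] [FunLike F A ℂ]
  [LinearMapClass F ℂ A ℂ]

noncomputable def conjDensity (τ : F) (g : A) : A :=
  (τ (star g * g))⁻¹ • (g * star g)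

lemma map_conjDensity_mul {τ : F} (htr : ∀ a b, τ (a * b) = τ (b * a)) (g a : A) :
    τ (conjDensity τ g * a) = τ (star g * a * g) / τ (star g * g) := by
  rw [conjDensity, smul_mul_assoc, map_smul, smul_eq_mul, htr (star g * a), ← mul_assoc,
    inv_mul_eq_div]

end Density

namespace CStarAlgebra

variable {A F : Type*} [CStarAlgebra A] [PartialOrder A] [StarOrderedRing A] [FunLike F A ℂ]

lemma map_nonneg_of_map_star_mul_self_nonneg {τ : F} (hpos : ∀ a, 0 ≤ τ (star a * a))
    {x : A} (hx : 0 ≤ x) : 0 ≤ τ x := by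
  obtain ⟨b, rfl⟩ := nonneg_iff_eq_star_mul_self.mp hx
  exact hpos b

lemma map_pos_of_isStrictlyPositive [LinearMapClass F ℂ A ℂ] {τ : F}
    (hpos : ∀ a, 0 ≤ τ (star a * a)) (h1 : τ 1 = 1)
    {x : A} (hx : IsStrictlyPositive x) : 0 < τ x := by
  have : Nontrivial A := ⟨1, 0, fun h => by simp [h] at h1⟩
  obtain ⟨r, hr, hrx⟩ := (CFC.exists_pos_algebraMap_le_iff hx.isSelfAdjoint).2
    fun _ => hx.spectrum_pos
  have hτr : τ (algebraMap ℝ A r) = r := by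
    rw [Algebra.algebraMap_eq_smul_one, ← Complex.coe_smul, map_smul, h1, smul_eq_mul, mul_one]
  calc (0 : ℂ) < r := Complex.zero_lt_real.mpr hr
    _ = τ (algebraMap ℝ A r) := hτr.symm
    _ ≤ τ x := sub_nonneg.mp <| by
        simpa using map_nonneg_of_map_star_mul_self_nonneg hpos (sub_nonneg.mpr hrx)

lemma isStrictlyPositive_conjDensity [LinearMapClass F ℂ A ℂ] {τ : F}
    (hpos : ∀ a, 0 ≤ τ (star a * a)) (h1 : τ 1 = 1)
    {g : A} (hg : IsUnit g) : IsStrictlyPositive (conjDensity τ g) :=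
  (isStrictlyPositive_iff_eq_mul_star_self.mpr ⟨g, hg, rfl⟩).smul <| inv_pos.mpr <|
    map_pos_of_isStrictlyPositive hpos h1 <|
      isStrictlyPositive_iff_eq_star_mul_self.mpr ⟨g, hg, rfl⟩

lemma isStrictlyPositive_convex_comb {a b : A} (ha : IsStrictlyPositive a)
    (hb : IsStrictlyPositive b) {t : ℝ} (ht0 : 0 ≤ t) (ht1 : t ≤ 1) :
    IsStrictlyPositive (t • a + (1 - t) • b) := by
  rcases ht0.lt_or_eq with ht | rfl
  · exact (ha.smul ht).add_nonneg (smul_nonneg (sub_nonneg.mpr ht1) hb.nonneg)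
  · simpa using hb

lemma exists_unit_map_star_mul_mul_eq {τ : F} (htr : ∀ a b, τ (a * b) = τ (b * a))
    {x : A} (hx : IsStrictlyPositive x) :
    ∃ p : Aˣ, ∀ a, τ (star (p : A) * a * p) = τ (x * a) := by
  obtain ⟨p, hp⟩ := hx.isUnit_cfcSqrt
  refine ⟨p, fun a => ?_⟩
  rw [hp, (CFC.sqrt_nonneg x).isSelfAdjoint.star_eq, htr, ← mul_assoc,
    CFC.sqrt_mul_sqrt_self x hx.nonneg]

end CStarAlgebra

/-- If `τ` is a tracial state on a unital C*-algebra, the orbit of `τ` under the action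
`Φ_g(τ)(a) = τ(g† a g)/τ(g† g)` is convex: any convex combination of two points of the orbit is
again of the form `Φ_p(τ)` for some invertible `p`. -/
theorem stmt9 {A : Type*} [NormedRing A] [StarRing A] [CStarRing A] [NormedAlgebra ℂ A]
    [CompleteSpace A] [StarModule ℂ A] (τ : A →L[ℂ] ℂ)
    (hpos : ∀ a : A, 0 ≤ τ (star a * a)) (h1 : τ 1 = 1)
    (htr : ∀ a b : A, τ (a * b) = τ (b * a))
    (g₁ g₂ : Aˣ) (l : ℝ) (hl0 : 0 ≤ l) (hl1 : l ≤ 1) :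
    ∃ p : Aˣ, ∀ a : A,
      (l : ℂ) * (τ (star (g₁ : A) * a * (g₁ : A)) / τ (star (g₁ : A) * (g₁ : A))) +
          (1 - (l : ℂ)) * (τ (star (g₂ : A) * a * (g₂ : A)) / τ (star (g₂ : A) * (g₂ : A))) =
        τ (star (p : A) * a * (p : A)) / τ (star (p : A) * (p : A)) := by
  -- `A` carries no order in the statement: use the spectral order of the C⋆-algebra.
  let : CStarAlgebra A := { ‹NormedRing A›, ‹StarRing A›, ‹CStarRing A›,
    ‹NormedAlgebra ℂ A›, ‹StarModule ℂ A›, ‹CompleteSpace A› with }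
  let : PartialOrder A := CStarAlgebra.spectralOrder A
  have : StarOrderedRing A := CStarAlgebra.spectralOrderedRing A
  set x := l • conjDensity τ (g₁ : A) + (1 - l) • conjDensity τ (g₂ : A)
  have hx : IsStrictlyPositive x := CStarAlgebra.isStrictlyPositive_convex_comb
    (CStarAlgebra.isStrictlyPositive_conjDensity hpos h1 g₁.isUnit)
    (CStarAlgebra.isStrictlyPositive_conjDensity hpos h1 g₂.isUnit) hl0 hl1
  have hτx (a : A) : τ (x * a) =
      l * (τ (star (g₁ : A) * a * g₁) / τ (star (g₁ : A) * g₁)) +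
        (1 - l) * (τ (star (g₂ : A) * a * g₂) / τ (star (g₂ : A) * g₂)) := by
    simp only [x, add_mul, smul_mul_assoc, map_add, ← Complex.coe_smul, map_smul, smul_eq_mul,
      map_conjDensity_mul htr, Complex.ofReal_sub, Complex.ofReal_one]
  have hτg (g : Aˣ) : τ (star (g : A) * g) ≠ 0 :=
    (CStarAlgebra.map_pos_of_isStrictlyPositive hpos h1 <|
      CStarAlgebra.isStrictlyPositive_iff_eq_star_mul_self.mpr ⟨g, g.isUnit, rfl⟩).ne'
  obtain ⟨p, hp⟩ := CStarAlgebra.exists_unit_map_star_mul_mul_eq htr hx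
  have hpp : τ (star (p : A) * p) = 1 := by
    simpa [hτg] using (hp 1).trans (hτx 1)
  exact ⟨p, fun a => by rw [hp, hpp, div_one, hτx]⟩
end

section
/- Let 𝒜 be a unital C*-algebra, ξ a continuous self-adjoint linear functional, and a ∈ 𝒜. Then exp(t a) belongs to the isotropy subgroup 𝒢_ξ of the action α for all t ∈ ℝ if and only if ξ(a† b + b a) = 0 for all b ∈ 𝒜. In particular, the identity element 1 (or any nonzero real multiple of it) never satisfies this condition when ξ ≠ 0. -/
/-! The derivative of `t ↦ ξ (exp (t a)† b exp (t a))` is `ξ (a† c + c a)` with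
`c = exp (t a)† b exp (t a)`; since `b ↦ c` is onto, the condition on `a` says exactly that all
these derivatives vanish, i.e. that the functions are constant. For `a = γ 1` one has
`a† b + b a = 2 γ b`. -/

open NormedSpace

section RealBanachAlgebra

variable {A E : Type*} [NormedRing A] [NormedAlgebra ℝ A] [CompleteSpace A]
  [NormedAddCommGroup E] [NormedSpace ℝ E]

theorem hasDerivAt_exp_smul_mul_mul_exp_smul (x y b : A) (t : ℝ) :
    HasDerivAt (fun s : ℝ => exp (s • x) * b * exp (s • y))
      (x * (exp (t • x) * b * exp (t • y)) + exp (t • x) * b * exp (t • y) * y) t := by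
  convert ((hasDerivAt_exp_smul_const' x t).mul_const b).mul
    (hasDerivAt_exp_smul_const y t) using 1
  · rfl
  · simp only [mul_assoc]

theorem forall_map_exp_smul_mul_mul_exp_smul_eq_iff (φ : A →L[ℝ] E) (x y : A) :
    (∀ t : ℝ, ∀ b, φ (exp (t • x) * b * exp (t • y)) = φ b) ↔
      ∀ b, φ (x * b + b * y) = 0 := by
  have hφ (b : A) (t : ℝ) := φ.hasFDerivAt.comp_hasDerivAt t
    (hasDerivAt_exp_smul_mul_mul_exp_smul x y b t)
  constructor
  · intro h b
    have hconst : HasDerivAt (fun s : ℝ => φ (exp (s • x) * b * exp (s • y))) 0 0 := by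
      simpa only [h] using hasDerivAt_const (0 : ℝ) (φ b)
    simpa using (hφ b 0).unique hconst
  · intro h t b
    have hzero (s : ℝ) :
        HasDerivAt (fun s : ℝ => φ (exp (s • x) * b * exp (s • y))) 0 s := by
      simpa only [Function.comp_def, h] using hφ b s
    simpa using is_const_of_deriv_eq_zero (fun s => (hzero s).differentiableAt)
      (fun s => (hzero s).deriv) t 0

end RealBanachAlgebra

theorem star_smul_one_mul_add_mul_smul_one {A : Type*} [Ring A] [StarRing A] [Algebra ℂ A]
    [StarModule ℂ A] (γ : ℝ) (b : A) :
    star ((γ : ℂ) • (1 : A)) * b + b * ((γ : ℂ) • (1 : A)) = (2 * γ : ℂ) • b := by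
  rw [star_smul, star_one, Complex.star_def, Complex.conj_ofReal, smul_one_mul, mul_smul_one,
    ← add_smul, two_mul]

theorem stmt11_general {A : Type*} [NormedRing A] [StarRing A] [CStarRing A] [NormedAlgebra ℂ A]
    [CompleteSpace A] [StarModule ℂ A] (ξ : A →L[ℂ] ℂ)
    (a : A) :
    ((∀ t : ℝ, ∀ b : A,
        ξ (star (NormedSpace.exp ((t : ℂ) • a)) * b * NormedSpace.exp ((t : ℂ) • a)) = ξ b)
      ↔ ∀ b : A, ξ (star a * b + b * a) = 0) ∧
    ∀ γ : ℝ, γ ≠ 0 → ξ ≠ 0 →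
      ¬ ∀ b : A, ξ (star ((γ : ℂ) • (1 : A)) * b + b * ((γ : ℂ) • (1 : A))) = 0 := by
  have star_exp_smul (t : ℝ) : star (exp (t • a)) = exp (t • star a) := by
    rw [star_exp, star_smul, star_trivial]
  refine ⟨?_, fun γ hγ hξ h => hξ ?_⟩
  · simp only [Complex.coe_smul, star_exp_smul]
    exact forall_map_exp_smul_mul_mul_exp_smul_eq_iff (ξ.restrictScalars ℝ) (star a) a
  · ext b
    have h2γb := h b
    rw [star_smul_one_mul_add_mul_smul_one, map_smul, smul_eq_mul, mul_eq_zero] at h2γb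
    exact h2γb.resolve_left (by exact_mod_cast mul_ne_zero two_ne_zero hγ)

/-- `exp(t a)` belongs to the isotropy subgroup `𝒢_ξ` of the action `α` for all real `t` iff
`ξ(a† b + b a) = 0` for all `b`; and no nonzero real multiple of the identity satisfies this
condition when `ξ ≠ 0`. -/
theorem stmt11 {A : Type*} [NormedRing A] [StarRing A] [CStarRing A] [NormedAlgebra ℂ A]
    [CompleteSpace A] [StarModule ℂ A] (ξ : A →L[ℂ] ℂ)
    (hsa : ∀ a : A, ξ (star a) = star (ξ a)) (a : A) :
    ((∀ t : ℝ, ∀ b : A,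
        ξ (star (NormedSpace.exp ((t : ℂ) • a)) * b * NormedSpace.exp ((t : ℂ) • a)) = ξ b)
      ↔ ∀ b : A, ξ (star a * b + b * a) = 0) ∧
    ∀ γ : ℝ, γ ≠ 0 → ξ ≠ 0 →
      ¬ ∀ b : A, ξ (star ((γ : ℂ) • (1 : A)) * b + b * ((γ : ℂ) • (1 : A))) = 0 :=
  stmt11_general ξ a
end

section
/- Let ℋ be a complex separable Hilbert space and ϱ a nonzero positive trace-class operator on ℋ with spectral decomposition ϱ = Σ_j p^j |e_j⟩⟨e_j| (p^j > 0). Then a bounded operator a ∈ B(ℋ) satisfies Tr(ϱ(a† b + b a)) = 0 for all b ∈ B(ℋ) if and only if: ⟨f_l| a |e_k⟩ = 0 for all basis vectors f_l of ker ϱ and e_k of (ker ϱ)^⊥, and ⟨e_k| a |e_l⟩ = −(p_k/p_l) · conj(⟨e_l| a |e_k⟩) for all k, l. -/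
/-!
Testing `Tr (ϱ (a† b + b a))` against the rank-one operators `b = |v⟩⟨e j|` with `v = f k` or
`v = e l` collapses the trace to `p j ⟪a e_j, f_k⟫`, resp.
`p j ⟪a e_j, e_l⟫ + p l ⟪e_j, a e_l⟫`, which gives both conditions; the second one says that the
matrix of `a ϱ + ϱ a†` on the `e`'s vanishes.

Conversely, the first condition puts every `a e_j` in the closed span of the `e`'s, so Parseval
expands `Tr (ϱ (a† b + b a))` over the `e`'s only, and the second condition turns it into
`∑ j, ∑ l, (F (j, l) - F (l, j))` with `F (j, l) = p j ⟪b† e_j, e_l⟫ ⟪e_l, a e_j⟫`. By Bessel's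
inequality and `∑ p j < ∞` the family `F` is absolutely summable, so this double sum is `0`.
-/

open scoped InnerProductSpace

theorem tsum_sub_tsum_swap_eq_zero {α ι : Type*} [NormedAddCommGroup α] [CompleteSpace α]
    {F : ι × ι → α} (hF : Summable F) : ∑' j, (∑' l, F (j, l) - ∑' l, F (l, j)) = 0 := by
  have hF' : Summable fun q : ι × ι => F (q.2, q.1) := hF.prod_symm
  have hswap : ∑' j, ∑' l, F (l, j) = ∑' j, ∑' l, F (j, l) := by
    rw [← hF.tsum_prod, ← hF'.tsum_prod]
    exact (Equiv.prodComm ι ι).tsum_eq F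
  rw [hF.prod.tsum_sub hF'.prod, hswap, sub_self]

section InnerProductSpace

variable {𝕜 E ι κ : Type*} [RCLike 𝕜] [NormedAddCommGroup E] [InnerProductSpace 𝕜 E]

theorem norm_inner_mul_inner_le_half_add_sq (x y v : E) :
    ‖⟪x, v⟫_𝕜 * ⟪v, y⟫_𝕜‖ ≤ (‖⟪v, x⟫_𝕜‖ ^ 2 + ‖⟪v, y⟫_𝕜‖ ^ 2) / 2 := by
  rw [norm_mul, norm_inner_symm]
  nlinarith [sq_nonneg (‖⟪v, x⟫_𝕜‖ - ‖⟪v, y⟫_𝕜‖)]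

namespace Orthonormal

variable {e : ι → E} (he : Orthonormal 𝕜 e)
include he

theorem summable_norm_inner_mul_inner (x y : E) :
    Summable fun i => ‖⟪x, e i⟫_𝕜 * ⟪e i, y⟫_𝕜‖ :=
  .of_nonneg_of_le (fun _ => norm_nonneg _)
    (fun i => norm_inner_mul_inner_le_half_add_sq x y (e i))
    (((he.inner_products_summable x).add (he.inner_products_summable y)).div_const 2)

theorem tsum_norm_inner_mul_inner_le (x y : E) :
    ∑' i, ‖⟪x, e i⟫_𝕜 * ⟪e i, y⟫_𝕜‖ ≤ (‖x‖ ^ 2 + ‖y‖ ^ 2) / 2 := by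
  have hx := he.inner_products_summable x
  have hy := he.inner_products_summable y
  calc ∑' i, ‖⟪x, e i⟫_𝕜 * ⟪e i, y⟫_𝕜‖
      ≤ ∑' i, (‖⟪e i, x⟫_𝕜‖ ^ 2 + ‖⟪e i, y⟫_𝕜‖ ^ 2) / 2 :=
        (he.summable_norm_inner_mul_inner x y).tsum_le_tsum
          (fun i => norm_inner_mul_inner_le_half_add_sq x y (e i)) ((hx.add hy).div_const 2)
    _ = ((∑' i, ‖⟪e i, x⟫_𝕜‖ ^ 2) + ∑' i, ‖⟪e i, y⟫_𝕜‖ ^ 2) / 2 := by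
        rw [tsum_div_const, hx.tsum_add hy]
    _ ≤ (‖x‖ ^ 2 + ‖y‖ ^ 2) / 2 := by
        gcongr <;> exact he.tsum_inner_products_le _

theorem summable_mul_inner_mul_inner {p : κ → 𝕜} (hp : Summable fun j => ‖p j‖)
    {x y : κ → E} {C D : ℝ} (hx : ∀ j, ‖x j‖ ≤ C) (hy : ∀ j, ‖y j‖ ≤ D) :
    Summable fun q : κ × ι => p q.1 * (⟪x q.1, e q.2⟫_𝕜 * ⟪e q.2, y q.1⟫_𝕜) := by
  refine Summable.of_norm ((summable_prod_of_nonneg fun _ => norm_nonneg _).mpr ⟨?_, ?_⟩)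
  · intro j
    simpa only [norm_mul] using (he.summable_norm_inner_mul_inner (x j) (y j)).mul_left ‖p j‖
  · refine .of_nonneg_of_le (fun _ => tsum_nonneg fun _ => norm_nonneg _) (fun j => ?_)
      (hp.mul_right ((C ^ 2 + D ^ 2) / 2))
    dsimp only
    simp only [norm_mul _ (_ * _), tsum_mul_left]
    gcongr
    refine (he.tsum_norm_inner_mul_inner_le _ _).trans ?_
    gcongr
    · exact hx j
    · exact hy j

end Orthonormal

theorem HilbertBasis.hasSum_inl_inner_mul_inner (B : HilbertBasis (ι ⊕ κ) 𝕜 E) {x y : E}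
    (h : ∀ k, ⟪x, B (.inr k)⟫_𝕜 * ⟪B (.inr k), y⟫_𝕜 = 0) :
    HasSum (fun j => ⟪x, B (.inl j)⟫_𝕜 * ⟪B (.inl j), y⟫_𝕜) ⟪x, y⟫_𝕜 := by
  refine (Sum.inl_injective.hasSum_iff ?_).mpr (B.hasSum_inner_mul_inner x y)
  rintro (j | k) hjk
  · exact absurd ⟨j, rfl⟩ hjk
  · exact h k

/-- `Tr (ϱ c)` for `ϱ = ∑ j, p j • |e j⟩⟨e j|`; the `tsum` is `0` if the series diverges. -/
noncomputable def weightedTrace (p : ι → 𝕜) (e : ι → E) (c : E →L[𝕜] E) : 𝕜 :=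
  ∑' j, p j * ⟪e j, c (e j)⟫_𝕜

variable [CompleteSpace E]

theorem inner_star_mul_add_mul_apply (a b : E →L[𝕜] E) (x : E) :
    ⟪x, (star a * b + b * a) x⟫_𝕜 = ⟪a x, b x⟫_𝕜 + ⟪x, b (a x)⟫_𝕜 := by
  rw [add_apply, mul_apply_eq_comp, mul_apply_eq_comp, inner_add_right,
    ContinuousLinearMap.star_eq_adjoint, ContinuousLinearMap.adjoint_inner_right]

theorem ContinuousLinearMap.star_inner_left (b : E →L[𝕜] E) (x y : E) :
    ⟪star b x, y⟫_𝕜 = ⟪x, b y⟫_𝕜 := by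
  rw [ContinuousLinearMap.star_eq_adjoint, ContinuousLinearMap.adjoint_inner_left]

theorem weightedTrace_star_mul_add_mul_rankOne {e : ι → E} (he : Orthonormal 𝕜 e) (p : ι → 𝕜)
    (a : E →L[𝕜] E) (j : ι) (v : E) {s : 𝕜}
    (hs : HasSum (fun m => p m * (⟪e j, a (e m)⟫_𝕜 * ⟪e m, v⟫_𝕜)) s) :
    weightedTrace p e (star a * InnerProductSpace.rankOne 𝕜 v (e j)
      + InnerProductSpace.rankOne 𝕜 v (e j) * a) = p j * ⟪a (e j), v⟫_𝕜 + s := by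
  classical
  refine HasSum.tsum_eq ?_
  convert (hasSum_ite_eq j (p j * ⟪a (e j), v⟫_𝕜)).add hs using 2 with m
  rw [inner_star_mul_add_mul_apply, mul_add]
  simp only [InnerProductSpace.rankOne_apply, inner_smul_right, orthonormal_iff_ite.mp he j m]
  by_cases hmj : m = j
  · subst hmj; simp
  · simp [hmj, Ne.symm hmj]

section forward

variable {e : ι → E} (he : Orthonormal 𝕜 e) {p : ι → 𝕜} {a : E →L[𝕜] E}
  (h : ∀ b, weightedTrace p e (star a * b + b * a) = 0)
include he h

theorem inner_apply_eq_zero_of_forall_weightedTrace_eq_zero {j : ι} (hp : p j ≠ 0) {v : E}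
    (hv : ∀ m, ⟪e m, v⟫_𝕜 = 0) : ⟪a (e j), v⟫_𝕜 = 0 := by
  have hs : HasSum (fun m => p m * (⟪e j, a (e m)⟫_𝕜 * ⟪e m, v⟫_𝕜)) 0 := by
    simpa only [hv, mul_zero] using hasSum_zero
  have := h (InnerProductSpace.rankOne 𝕜 v (e j))
  rw [weightedTrace_star_mul_add_mul_rankOne he p a j v hs, add_zero] at this
  exact (mul_eq_zero.mp this).resolve_left hp

theorem mul_inner_add_mul_inner_eq_zero_of_forall_weightedTrace_eq_zero (j l : ι) :
    p j * ⟪a (e j), e l⟫_𝕜 + p l * ⟪e j, a (e l)⟫_𝕜 = 0 := by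
  have hs : HasSum (fun m => p m * (⟪e j, a (e m)⟫_𝕜 * ⟪e m, e l⟫_𝕜))
      (p l * ⟪e j, a (e l)⟫_𝕜) := by
    classical
    convert hasSum_ite_eq l (p l * ⟪e j, a (e l)⟫_𝕜) using 2 with m
    rw [orthonormal_iff_ite.mp he m l]
    split_ifs with hml <;> simp [hml]
  rw [← weightedTrace_star_mul_add_mul_rankOne he p a j (e l) hs]
  exact h _

end forward

theorem weightedTrace_star_mul_add_mul_eq_zero (B : HilbertBasis (ι ⊕ κ) 𝕜 E) {e : ι → E}
    (hB : ∀ j, B (.inl j) = e j) {p : ι → 𝕜} (hp : Summable fun j => ‖p j‖) {a : E →L[𝕜] E}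
    (hker : ∀ j k, ⟪B (.inr k), a (e j)⟫_𝕜 = 0)
    (hskew : ∀ j l, p j * ⟪a (e j), e l⟫_𝕜 + p l * ⟪e j, a (e l)⟫_𝕜 = 0) (b : E →L[𝕜] E) :
    weightedTrace p e (star a * b + b * a) = 0 := by
  have he : Orthonormal 𝕜 e := by
    convert B.orthonormal.comp _ Sum.inl_injective
    exact funext fun j => (hB j).symm
  have hF := he.summable_mul_inner_mul_inner hp (x := fun j => star b (e j))
    (y := fun j => a (e j))
    (fun j => (star b).le_opNorm_of_le (he.1 j).le) (fun j => a.le_opNorm_of_le (he.1 j).le)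
  have hrow : ∀ j, p j * ⟪e j, (star a * b + b * a) (e j)⟫_𝕜
      = ∑' l, p j * (⟪star b (e j), e l⟫_𝕜 * ⟪e l, a (e j)⟫_𝕜)
        - ∑' l, p l * (⟪star b (e l), e j⟫_𝕜 * ⟪e j, a (e l)⟫_𝕜) := by
    intro j
    have hab : HasSum (fun l => ⟪a (e j), e l⟫_𝕜 * ⟪e l, b (e j)⟫_𝕜) ⟪a (e j), b (e j)⟫_𝕜 := by
      simpa only [hB] using B.hasSum_inl_inner_mul_inner fun k => by
        rw [inner_eq_zero_symm.mp (hker j k), zero_mul]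
    have hba : HasSum (fun l => ⟪star b (e j), e l⟫_𝕜 * ⟪e l, a (e j)⟫_𝕜)
        ⟪e j, b (a (e j))⟫_𝕜 := by
      rw [← ContinuousLinearMap.star_inner_left]
      simpa only [hB] using B.hasSum_inl_inner_mul_inner fun k => by rw [hker j k, mul_zero]
    have hterm : ∀ l, p j * (⟪a (e j), e l⟫_𝕜 * ⟪e l, b (e j)⟫_𝕜)
        = -(p l * (⟪star b (e l), e j⟫_𝕜 * ⟪e j, a (e l)⟫_𝕜)) := fun l => by
      rw [ContinuousLinearMap.star_inner_left]
      linear_combination ⟪e l, b (e j)⟫_𝕜 * hskew j l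
    rw [inner_star_mul_add_mul_apply, ← hab.tsum_eq, ← hba.tsum_eq, mul_add, ← tsum_mul_left,
      ← tsum_mul_left, tsum_congr hterm, tsum_neg]
    ring
  rw [weightedTrace, tsum_congr hrow]
  exact tsum_sub_tsum_swap_eq_zero hF

end InnerProductSpace

theorem eq_neg_div_mul_iff_mul_add_mul_eq_zero {K : Type*} [Field K] {x y z w : K} (hy : y ≠ 0) :
    z = -(x / y) * w ↔ x * w + y * z = 0 := by
  rw [neg_mul, div_mul_eq_mul_div, ← neg_div, eq_div_iff hy]
  constructor <;> intro h <;> linear_combination h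

theorem stmt14_general {H : Type*} [NormedAddCommGroup H] [InnerProductSpace ℂ H] [CompleteSpace H]
    {ι κ : Type*}
    (e : ι → H) (f : κ → H)
    (honb : Orthonormal ℂ (Sum.elim e f))
    (htotal : (Submodule.span ℂ (Set.range (Sum.elim e f))).topologicalClosure = ⊤)
    (p : ι → ℝ) (hp : ∀ j, 0 < p j) (hsum : Summable p)
    (a : H →L[ℂ] H) :
    (∀ b : H →L[ℂ] H,
        ∑' j : ι, (p j : ℂ) * ⟪e j, (star a * b + b * a) (e j)⟫_ℂ = 0) ↔
      (∀ (k : κ) (j : ι), ⟪f k, a (e j)⟫_ℂ = 0) ∧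
        ∀ j l : ι, ⟪e j, a (e l)⟫_ℂ = -((p j : ℂ) / (p l : ℂ)) * star ⟪e l, a (e j)⟫_ℂ := by
  set B := HilbertBasis.mk honb htotal.ge
  have hB : ⇑B = Sum.elim e f := HilbertBasis.coe_mk _ _
  have he : Orthonormal ℂ e := by simpa using honb.comp _ Sum.inl_injective
  have hf : ∀ j k, ⟪e j, f k⟫_ℂ = 0 := fun j k => by
    simpa using honb.2 (Sum.inl_ne_inr (a := j) (b := k))
  have hskew_iff : ∀ j l, (⟪e j, a (e l)⟫_ℂ = -((p j : ℂ) / (p l : ℂ)) * star ⟪e l, a (e j)⟫_ℂ)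
      ↔ (p j : ℂ) * ⟪a (e j), e l⟫_ℂ + (p l : ℂ) * ⟪e j, a (e l)⟫_ℂ = 0 := fun j l => by
    rw [← inner_conj_symm (e l), starRingEnd_apply, star_star]
    exact eq_neg_div_mul_iff_mul_add_mul_eq_zero (Complex.ofReal_ne_zero.mpr (hp l).ne')
  simp only [hskew_iff]
  change (∀ b, weightedTrace (fun j => (p j : ℂ)) e (star a * b + b * a) = 0) ↔ _
  constructor
  · intro h
    refine ⟨fun k j => inner_eq_zero_symm.mp ?_,
      mul_inner_add_mul_inner_eq_zero_of_forall_weightedTrace_eq_zero he h⟩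
    exact inner_apply_eq_zero_of_forall_weightedTrace_eq_zero he h
      (Complex.ofReal_ne_zero.mpr (hp j).ne') fun m => hf m k
  · rintro ⟨hker, hskew⟩
    exact weightedTrace_star_mul_add_mul_eq_zero B (fun j => by simp [hB])
      (by simpa using hsum.abs) (fun j k => by simpa [hB] using hker k j) hskew

/-- Characterization of the Lie algebra of the isotropy group of a nonzero positive trace-class
operator `ϱ = Σ_j p_j |e_j⟩⟨e_j|` on a complex separable Hilbert space: a bounded operator `a`
satisfies `Tr(ϱ(a† b + b a)) = 0` for all `b` iff `⟨f_l|a|e_k⟩ = 0` for all basis vectors `f_l`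
of `ker ϱ`, `e_k` of its orthocomplement, and `⟨e_k|a|e_l⟩ = −(p_k/p_l) conj(⟨e_l|a|e_k⟩)`. -/
theorem stmt14 {H : Type*} [NormedAddCommGroup H] [InnerProductSpace ℂ H] [CompleteSpace H]
    [TopologicalSpace.SeparableSpace H]
    {ι κ : Type*} [Countable ι] [Countable κ]
    (e : ι → H) (f : κ → H)
    (honb : Orthonormal ℂ (Sum.elim e f))
    (htotal : (Submodule.span ℂ (Set.range (Sum.elim e f))).topologicalClosure = ⊤)
    (p : ι → ℝ) (hp : ∀ j, 0 < p j) (hsum : Summable p)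
    (ϱ : H →L[ℂ] H) (hϱe : ∀ j, ϱ (e j) = (p j : ℂ) • e j) (hϱf : ∀ k, ϱ (f k) = 0)
    (hϱ0 : ϱ ≠ 0)
    (a : H →L[ℂ] H) :
    (∀ b : H →L[ℂ] H,
        ∑' j : ι, (p j : ℂ) * ⟪e j, (star a * b + b * a) (e j)⟫_ℂ = 0) ↔
      (∀ (k : κ) (j : ι), ⟪f k, a (e j)⟫_ℂ = 0) ∧
        ∀ j l : ι, ⟪e j, a (e l)⟫_ℂ = -((p j : ℂ) / (p l : ℂ)) * star ⟪e l, a (e j)⟫_ℂ :=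
  stmt14_general e f honb htotal p hp hsum a
end

section
/- Let ℋ be a complex separable Hilbert space, 𝒜 = B(ℋ), and ϱ₀, ϱ₁ density operators (positive trace-class with unit trace) whose supports have the same finite rank N. Then there exists a bounded invertible operator g on ℋ such that ϱ₁ = g ϱ₀ g† / Tr(g ϱ₀ g†); i.e., finite-rank density operators of equal rank lie in the same orbit of the action Φ of GL(ℋ). -/
open Submodule ContinuousLinearMap
open scoped InnerProductSpace


/-- Two density operators on a complex separable Hilbert space whose supports have the same
finite rank `N` lie in the same orbit of the action `Φ` of `GL(H)`: there is a bounded invertible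
`g` with `ϱ₁ = g ϱ₀ g† / Tr(g ϱ₀ g†)`, i.e. `g ϱ₀ g† = c • ϱ₁` for some `c > 0` (`c` being the
trace of `g ϱ₀ g†`). -/
theorem stmt16 {H : Type*} [NormedAddCommGroup H] [InnerProductSpace ℂ H] [CompleteSpace H]
    [TopologicalSpace.SeparableSpace H]
    {N : ℕ} {κ : Type*} [Countable κ]
    (e₀ e₁ : Fin N → H) (f₀ f₁ : κ → H)
    (honb₀ : Orthonormal ℂ (Sum.elim e₀ f₀)) (honb₁ : Orthonormal ℂ (Sum.elim e₁ f₁))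
    (htot₀ : (Submodule.span ℂ (Set.range (Sum.elim e₀ f₀))).topologicalClosure = ⊤)
    (htot₁ : (Submodule.span ℂ (Set.range (Sum.elim e₁ f₁))).topologicalClosure = ⊤)
    (p₀ p₁ : Fin N → ℝ) (hp₀ : ∀ j, 0 < p₀ j) (hp₁ : ∀ j, 0 < p₁ j)
    (htr₀ : ∑ j, p₀ j = 1) (htr₁ : ∑ j, p₁ j = 1)
    (ϱ₀ ϱ₁ : H →L[ℂ] H)
    (hϱ₀e : ∀ j, ϱ₀ (e₀ j) = (p₀ j : ℂ) • e₀ j) (hϱ₀f : ∀ k, ϱ₀ (f₀ k) = 0)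
    (hϱ₁e : ∀ j, ϱ₁ (e₁ j) = (p₁ j : ℂ) • e₁ j) (hϱ₁f : ∀ k, ϱ₁ (f₁ k) = 0) :
    ∃ g : (H →L[ℂ] H)ˣ, ∃ c : ℝ, 0 < c ∧
      (g : H →L[ℂ] H) * ϱ₀ * star (g : H →L[ℂ] H) = (c : ℂ) • ϱ₁ := by
  classical
  -- orthonormality facts
  have hon₀ := orthonormal_iff_ite.mp honb₀
  have hee₀ : ∀ i j : Fin N, ⟪e₀ i, e₀ j⟫_ℂ = if i = j then 1 else 0 := by
    intro i j
    simpa using hon₀ (Sum.inl i) (Sum.inl j)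
  have hef₀ : ∀ (k : κ) (i : Fin N), ⟪f₀ k, e₀ i⟫_ℂ = 0 := by
    intro k i; simpa using hon₀ (Sum.inr k) (Sum.inl i)
  -- the scaling coefficients
  set c : Fin N → ℝ := fun j => Real.sqrt (p₁ j / p₀ j) with hc
  have hcpos : ∀ j, 0 < c j := fun j =>
    Real.sqrt_pos.mpr (div_pos (hp₁ j) (hp₀ j))
  have hc2 : ∀ j, c j * c j * p₀ j = p₁ j := by
    intro j
    rw [Real.mul_self_sqrt (le_of_lt (div_pos (hp₁ j) (hp₀ j))), div_mul_cancel₀]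
    exact (hp₀ j).ne'
  -- rank one operators
  set R : Fin N → (H →L[ℂ] H) := fun j => (innerSL ℂ (e₀ j)).smulRight (e₀ j) with hR
  have hRapp : ∀ j x, R j x = ⟪e₀ j, x⟫_ℂ • e₀ j := fun j x => rfl
  -- diagonal-type operators
  have key : ∀ (t : Fin N → ℂ) (i : Fin N),
      (1 + ∑ j, t j • R j) (e₀ i) = (1 + t i) • e₀ i := by
    intro t i
    simp only [ContinuousLinearMap.add_apply, ContinuousLinearMap.one_apply,
      ContinuousLinearMap.sum_apply, ContinuousLinearMap.smul_apply, hRapp, hee₀,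
      ite_smul, one_smul, zero_smul, smul_ite, smul_zero]
    rw [Finset.sum_ite_eq' Finset.univ i (fun j => t j • e₀ j)]
    simp [add_smul]
  have keyf : ∀ (t : Fin N → ℂ) (k : κ),
      (1 + ∑ j, t j • R j) (f₀ k) = f₀ k := by
    intro t k
    have : ∀ j : Fin N, ⟪e₀ j, f₀ k⟫_ℂ = 0 := by
      intro j; simpa using hon₀ (Sum.inl j) (Sum.inr k)
    simp [hRapp, this]
  set D : H →L[ℂ] H := 1 + ∑ j, (((c j : ℂ)) - 1) • R j with hD
  set D' : H →L[ℂ] H := 1 + ∑ j, ((((c j)⁻¹ : ℝ) : ℂ) - 1) • R j with hD'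
  have hDe : ∀ i, D (e₀ i) = (c i : ℂ) • e₀ i := by
    intro i; rw [hD, key]; ring_nf
  have hD'e : ∀ i, D' (e₀ i) = (((c i)⁻¹ : ℝ) : ℂ) • e₀ i := by
    intro i; rw [hD', key]; ring_nf
  have hDf : ∀ k, D (f₀ k) = f₀ k := fun k => keyf _ k
  have hD'f : ∀ k, D' (f₀ k) = f₀ k := fun k => keyf _ k
  -- Hilbert bases and the unitary
  have dense₀ : Dense ((Submodule.span ℂ (Set.range (Sum.elim e₀ f₀))) : Set H) :=
    Submodule.dense_iff_topologicalClosure_eq_top.mpr htot₀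
  have dense₁ : Dense ((Submodule.span ℂ (Set.range (Sum.elim e₁ f₁))) : Set H) :=
    Submodule.dense_iff_topologicalClosure_eq_top.mpr htot₁
  set b₀ : HilbertBasis (Fin N ⊕ κ) ℂ H := HilbertBasis.mk honb₀ htot₀.ge with hb₀
  set b₁ : HilbertBasis (Fin N ⊕ κ) ℂ H := HilbertBasis.mk honb₁ htot₁.ge with hb₁
  set U : H ≃ₗᵢ[ℂ] H := b₀.repr.trans b₁.repr.symm with hU
  have hUb : ∀ i, U (Sum.elim e₀ f₀ i) = Sum.elim e₁ f₁ i := by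
    intro i
    have h0 : Sum.elim e₀ f₀ i = b₀ i := by rw [hb₀, HilbertBasis.coe_mk]
    have h1 : Sum.elim e₁ f₁ i = b₁ i := by rw [hb₁, HilbertBasis.coe_mk]
    rw [h0, h1, hU, LinearIsometryEquiv.trans_apply, HilbertBasis.repr_self,
      HilbertBasis.repr_symm_single]
  have hUe : ∀ j, U (e₀ j) = e₁ j := fun j => hUb (Sum.inl j)
  have hUf : ∀ k, U (f₀ k) = f₁ k := fun k => hUb (Sum.inr k)
  set UL : H →L[ℂ] H := (U.toContinuousLinearEquiv : H →L[ℂ] H) with hUL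
  set UR : H →L[ℂ] H := (U.symm.toContinuousLinearEquiv : H →L[ℂ] H) with hUR
  have hULapp : ∀ x, UL x = U x := fun x => rfl
  have hURapp : ∀ x, UR x = U.symm x := fun x => rfl
  -- D D' = D' D = 1
  have hDD' : D * D' = 1 := by
    refine ContinuousLinearMap.ext_on dense₀ ?_
    rintro x ⟨i, rfl⟩
    cases i with
    | inl j =>
      simp only [ContinuousLinearMap.mul_apply, Sum.elim_inl, hD'e, map_smul, hDe,
        ContinuousLinearMap.one_apply, smul_smul]
      norm_cast
      rw [inv_mul_cancel₀ (ne_of_gt (hcpos j))]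
      simp
    | inr k =>
      simp [ContinuousLinearMap.mul_apply, hDf, hD'f]
  have hD'D : D' * D = 1 := by
    refine ContinuousLinearMap.ext_on dense₀ ?_
    rintro x ⟨i, rfl⟩
    cases i with
    | inl j =>
      simp only [ContinuousLinearMap.mul_apply, Sum.elim_inl, hDe, map_smul, hD'e,
        ContinuousLinearMap.one_apply, smul_smul]
      norm_cast
      rw [mul_inv_cancel₀ (ne_of_gt (hcpos j))]
      simp
    | inr k =>
      simp [ContinuousLinearMap.mul_apply, hDf, hD'f]
  have hULUR : UL * UR = 1 := by
    ext x; simp [ContinuousLinearMap.mul_apply, hULapp, hURapp]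
  have hURUL : UR * UL = 1 := by
    ext x; simp [ContinuousLinearMap.mul_apply, hULapp, hURapp]
  -- the invertible operator
  refine ⟨⟨UL * D, D' * UR, ?_, ?_⟩, 1, one_pos, ?_⟩
  · rw [mul_assoc, ← mul_assoc D D' UR, hDD', one_mul, hULUR]
  · rw [mul_assoc, ← mul_assoc UR UL D, hURUL, one_mul, hD'D]
  -- the orbit equation
  set g : H →L[ℂ] H := UL * D with hg
  -- adjoint of g on the second basis
  have hDinner : ∀ (j : Fin N) (x : H), ⟪e₀ j, D x⟫_ℂ = (c j : ℂ) * ⟪e₀ j, x⟫_ℂ := by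
    intro j x
    rw [hD]
    simp only [ContinuousLinearMap.add_apply, ContinuousLinearMap.one_apply,
      ContinuousLinearMap.sum_apply, ContinuousLinearMap.smul_apply, hRapp,
      inner_add_right, inner_sum, inner_smul_right, hee₀]
    rw [Finset.sum_eq_single j]
    · simp; ring
    · intro b _ hb; simp [hb.symm]
    · simp
  have hDinnerf : ∀ (k : κ) (x : H), ⟪f₀ k, D x⟫_ℂ = ⟪f₀ k, x⟫_ℂ := by
    intro k x
    rw [hD]
    simp only [ContinuousLinearMap.add_apply, ContinuousLinearMap.one_apply,
      ContinuousLinearMap.sum_apply, ContinuousLinearMap.smul_apply, hRapp,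
      inner_add_right, inner_sum, inner_smul_right, hef₀]
    simp
  have hadj_e : ∀ j, ContinuousLinearMap.adjoint g (e₁ j) = (c j : ℂ) • e₀ j := by
    intro j
    refine ext_inner_right ℂ fun x => ?_
    rw [ContinuousLinearMap.adjoint_inner_left]
    rw [hg, ContinuousLinearMap.mul_apply, hULapp, ← hUe j, U.inner_map_map,
      hDinner, inner_smul_left]
    norm_num
  have hadj_f : ∀ k, ContinuousLinearMap.adjoint g (f₁ k) = f₀ k := by
    intro k
    refine ext_inner_right ℂ fun x => ?_
    rw [ContinuousLinearMap.adjoint_inner_left]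
    rw [hg, ContinuousLinearMap.mul_apply, hULapp, ← hUf k, U.inner_map_map, hDinnerf]
  have hge : ∀ j, g (e₀ j) = (c j : ℂ) • e₁ j := by
    intro j
    rw [hg, ContinuousLinearMap.mul_apply, hULapp, hDe, map_smul, hUe]
  show g * ϱ₀ * star g = ((1 : ℝ) : ℂ) • ϱ₁
  rw [ContinuousLinearMap.star_eq_adjoint]
  refine ContinuousLinearMap.ext_on dense₁ ?_
  rintro x ⟨i, rfl⟩
  cases i with
  | inl j =>
    simp only [Sum.elim_inl, ContinuousLinearMap.mul_apply, hadj_e, map_smul, hϱ₀e,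
      ContinuousLinearMap.smul_apply, hϱ₁e, hge, smul_smul]
    congr 1
    rw [← hc2 j]
    push_cast
    ring
  | inr k =>
    simp [ContinuousLinearMap.mul_apply, hadj_f, hϱ₀f, hϱ₁f]
end

section
/- Let 𝒜 be a unital C*-algebra, ρ a state, and let 𝔤_ρ^α = {a ∈ 𝒜 : ρ(a† b + b a) = 0 for all b} and 𝔤_ρ = {a ∈ 𝒜 : ρ(a† b + b a) = ρ(b) ρ(a† + a) for all b}. Then 𝔤_ρ = 𝔤_ρ^α ⊕ ℝ·1, i.e., every a ∈ 𝔤_ρ decomposes uniquely as a = a₀ + γ 1 with a₀ ∈ 𝔤_ρ^α and γ ∈ ℝ, where γ = ½ ρ(a + a†). -/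
open scoped ComplexOrder

/-- A positive linear functional on a unital C*-algebra is star-preserving. -/
theorem stmt18_aux_star {A : Type*} [NormedRing A] [StarRing A] [CStarRing A] [NormedAlgebra ℂ A]
    [CompleteSpace A] [StarModule ℂ A] (ρ : A →L[ℂ] ℂ)
    (hpos : ∀ a : A, 0 ≤ ρ (star a * a)) (h1 : ρ 1 = 1) :
    ∀ a : A, ρ (star a) = starRingEnd ℂ (ρ a) := by
  have him : ∀ a : A, (ρ (star a * a)).im = 0 := fun a => ((Complex.le_def.mp (hpos a)).2).symm
  intro a
  have e1 := him (a + 1)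
  have e2 := him (a + Complex.I • 1)
  simp only [star_add, star_one, star_smul, add_mul, mul_add, mul_one, one_mul, map_add,
    map_smul, smul_mul_assoc, mul_smul_comm, star_one, Complex.star_def, Complex.conj_I,
    smul_smul, h1, smul_eq_mul] at e1 e2
  simp only [Complex.add_im, Complex.mul_im, Complex.I_re, Complex.I_im, Complex.neg_im,
    Complex.neg_re, Complex.one_im, Complex.one_re, him a] at e1 e2
  simp only [Complex.ext_iff, Complex.conj_re, Complex.conj_im]
  constructor <;> linarith

/-- For a state `ρ` on a unital C*-algebra, the Lie algebra
`𝔤_ρ = {a : ρ(a† b + b a) = ρ(b) ρ(a† + a) ∀b}` of the isotropy group under `Φ` decomposes as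
`𝔤_ρ = 𝔤_ρ^α ⊕ ℝ·1`, where `𝔤_ρ^α = {a : ρ(a† b + b a) = 0 ∀b}`: every `a₀ + γ·1` with
`a₀ ∈ 𝔤_ρ^α`, `γ ∈ ℝ` lies in `𝔤_ρ`, and every `a ∈ 𝔤_ρ` decomposes uniquely this way, with
`γ = ½ ρ(a + a†)`. -/
theorem stmt18 {A : Type*} [NormedRing A] [StarRing A] [CStarRing A] [NormedAlgebra ℂ A]
    [CompleteSpace A] [StarModule ℂ A] (ρ : A →L[ℂ] ℂ)
    (hpos : ∀ a : A, 0 ≤ ρ (star a * a)) (h1 : ρ 1 = 1) :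
    (∀ (a₀ : A) (γ : ℝ), (∀ b : A, ρ (star a₀ * b + b * a₀) = 0) →
        ∀ b : A, ρ (star (a₀ + (γ : ℂ) • 1) * b + b * (a₀ + (γ : ℂ) • 1)) =
          ρ b * ρ (star (a₀ + (γ : ℂ) • 1) + (a₀ + (γ : ℂ) • 1))) ∧
      ∀ a : A, (∀ b : A, ρ (star a * b + b * a) = ρ b * ρ (star a + a)) →
        (∃! q : A × ℝ,
            (∀ b : A, ρ (star q.1 * b + b * q.1) = 0) ∧ a = q.1 + ((q.2 : ℂ) • 1 : A)) ∧
          ∀ q : A × ℝ,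
            ((∀ b : A, ρ (star q.1 * b + b * q.1) = 0) ∧ a = q.1 + ((q.2 : ℂ) • 1 : A)) →
              (q.2 : ℂ) = 2⁻¹ * ρ (a + star a) := by
  have hstar := stmt18_aux_star ρ hpos h1
  constructor
  · intro a₀ γ h b
    have h0 : ρ (star a₀ * b) + ρ (b * a₀) = 0 := by simpa using h b
    have h10 : ρ (star a₀) + ρ a₀ = 0 := by simpa [h1] using h 1
    simp only [star_add, star_smul, Complex.star_def, Complex.conj_ofReal, add_mul, mul_add,
      smul_mul_assoc, mul_smul_comm, one_mul, mul_one, map_add, map_smul, h1, smul_eq_mul,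
      star_one]
    linear_combination h0 - ρ b * h10
  · intro a ha
    -- ρ (a + star a) is real
    set c : ℂ := ρ (a + star a) with hc
    have hcre : c = ((c.re : ℝ) : ℂ) := by
      rw [hc]
      simp only [map_add, hstar a]
      rw [Complex.ext_iff]
      simp [Complex.add_im]
    set γ : ℝ := 2⁻¹ * c.re with hγ
    have hγc : (γ : ℂ) = 2⁻¹ * c := by
      rw [hγ]; push_cast; rw [← hcre]
    have hsa : ρ (star a + a) = c := by rw [hc]; simp [map_add]; ring
    -- key: any valid decomposition has γ-component 2⁻¹ c
    have key : ∀ q : A × ℝ,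
        ((∀ b : A, ρ (star q.1 * b + b * q.1) = 0) ∧ a = q.1 + ((q.2 : ℂ) • 1 : A)) →
          (q.2 : ℂ) = 2⁻¹ * c := by
      rintro ⟨p, t⟩ ⟨hp, hpa⟩
      have h10 : ρ (star p) + ρ p = 0 := by simpa [h1] using hp 1
      have : c = 2 * (t : ℂ) := by
        rw [hc, hpa]
        simp only [star_add, star_smul, star_one, Complex.star_def, Complex.conj_ofReal, map_add,
          map_smul, h1, smul_eq_mul]
        linear_combination h10
      rw [this]; ring
    -- the witness
    have hq1 : ∀ b : A, ρ (star (a - (γ : ℂ) • 1) * b + b * (a - (γ : ℂ) • 1)) = 0 := by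
      intro b
      have hb := ha b
      simp only [star_sub, star_smul, Complex.star_def, Complex.conj_ofReal, sub_mul, mul_sub,
        smul_mul_assoc, mul_smul_comm, one_mul, mul_one, map_sub, map_add, map_smul,
        smul_eq_mul, star_one, h1] at hb ⊢
      have hsa' : ρ (star a) + ρ a = c := by simpa [map_add] using hsa
      have h2 : (γ : ℂ) * 2 = c := by rw [hγc]; ring
      linear_combination hb + ρ b * hsa' - ρ b * h2
    have hqa : a = (a - (γ : ℂ) • 1) + ((γ : ℂ) • 1 : A) := (sub_add_cancel a _).symm
    refine ⟨⟨(a - (γ : ℂ) • 1, γ), ⟨hq1, hqa⟩, ?_⟩, key⟩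
    rintro ⟨p, t⟩ hp
    have ht : (t : ℂ) = (γ : ℂ) := by rw [key _ hp, hγc]
    have ht' : t = γ := by exact_mod_cast ht
    have hp1 : p = a - (γ : ℂ) • 1 := by
      have := hp.2
      rw [ht'] at this
      exact eq_sub_of_add_eq this.symm
    simp [Prod.ext_iff, hp1, ht']
end
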